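/- arXiv:2602.09748 — 2 statements merged into one kernel-verified Lean document; each statement's English description precedes it below -/
import Mathlib

section
/- Let f be a norm on ℝ^p with dual norm f*, let (a, b) be a linear classifier with a ≠ 0, let x_F ∈ ℝ^p satisfy ⟪a, x_F⟫ < b, and let x_CF ∈ ℝ^p with x_CF ≠ x_F. Then x_CF is an optimal counterfactual of x_F under f if and only if there exists λ ∈ ℝ with λ ≠ 0 such that: ⟪a, x_CF⟫ = b, λ · ⟪a, x_CF − x_F⟫ = f(x_CF − x_F), and f*(λ • a) ≤ 1. -/
open Finset

noncomputable section

/-- The standard inner product on `Fin p → ℝ`. -/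
def dot {p : ℕ} (a x : Fin p → ℝ) : ℝ := ∑ k, a k * x k

/-- `f` is a norm on `ℝ^p`. -/
def IsNorm {p : ℕ} (f : (Fin p → ℝ) → ℝ) : Prop :=
  (∀ x, f x = 0 ↔ x = 0) ∧ (∀ (c : ℝ) (x : Fin p → ℝ), f (c • x) = |c| * f x) ∧
    (∀ x y, f (x + y) ≤ f x + f y)

/-- The dual norm `f*(w) = sup { ⟪w, v⟫ : f v ≤ 1 }`. -/
def dualNorm {p : ℕ} (f : (Fin p → ℝ) → ℝ) (w : Fin p → ℝ) : ℝ :=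
  sSup {t : ℝ | ∃ v : Fin p → ℝ, f v ≤ 1 ∧ t = dot w v}

/-- `xCF` is an optimal counterfactual of the factual `xF` (classified 'No') under norm `f`. -/
def IsOptCF {p : ℕ} (a : Fin p → ℝ) (b : ℝ) (f : (Fin p → ℝ) → ℝ)
    (xF xCF : Fin p → ℝ) : Prop :=
  b ≤ dot a xCF ∧ ∀ z : Fin p → ℝ, b ≤ dot a z → f (xCF - xF) ≤ f (z - xF)

/-- `xRCF` is an optimal robust counterfactual of the factual `xF` (classified 'No')
under norm `f`, with robustness norm `g` and radius `ρ`. -/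
def IsOptRCF {p : ℕ} (a : Fin p → ℝ) (b : ℝ) (f g : (Fin p → ℝ) → ℝ) (ρ : ℝ)
    (xF xRCF : Fin p → ℝ) : Prop :=
  (∀ s : Fin p → ℝ, g s ≤ ρ → b ≤ dot a (xRCF + s)) ∧
    ∀ z : Fin p → ℝ, (∀ s : Fin p → ℝ, g s ≤ ρ → b ≤ dot a (z + s)) →
      f (xRCF - xF) ≤ f (z - xF)

/-- `w` is a subgradient of `f` at `x₀`. -/
def IsSubgradient {p : ℕ} (f : (Fin p → ℝ) → ℝ) (x₀ w : Fin p → ℝ) : Prop :=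
  ∀ y : Fin p → ℝ, f x₀ + dot w (y - x₀) ≤ f y


/-! Scaling the minimiser of `f` over a half-space `{u | β ≤ ⟪a, u⟫}` (with `β > 0`) onto the
boundary hyperplane shows that it lies on that hyperplane and that `f ≥ (f d / β) ⟪a, ·⟫`
everywhere, i.e. `f*((f d / β) • a) ≤ 1`; conversely such a supporting functional certifies
minimality. Translating by `x_F` turns optimal counterfactuals into such minimisers. The only
analytic input is that the dual norm is a genuine supremum, which follows from `f` being
bounded below by a multiple of the sup norm (compactness of the unit sphere). -/

variable {p : ℕ}

lemma dot_zero_right (a : Fin p → ℝ) : dot a 0 = 0 := dotProduct_zero a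

lemma dot_add_right (a x y : Fin p → ℝ) : dot a (x + y) = dot a x + dot a y :=
  dotProduct_add a x y

lemma dot_sub_right (a x y : Fin p → ℝ) : dot a (x - y) = dot a x - dot a y :=
  dotProduct_sub a x y

lemma dot_smul_right (a : Fin p → ℝ) (c : ℝ) (x : Fin p → ℝ) : dot a (c • x) = c * dot a x :=
  dotProduct_smul c a x

lemma dot_smul_left (c : ℝ) (a x : Fin p → ℝ) : dot (c • a) x = c * dot a x :=
  smul_dotProduct c a x

lemma dot_le_sum_abs_mul_norm (a x : Fin p → ℝ) : dot a x ≤ (∑ i, |a i|) * ‖x‖ := by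
  rw [dot, sum_mul]
  refine sum_le_sum fun i _ => ?_
  calc a i * x i ≤ |a i| * |x i| := (le_abs_self _).trans (abs_mul _ _).le
    _ ≤ |a i| * ‖x‖ := by gcongr; exact norm_le_pi_norm x i

namespace IsNorm

variable {f : (Fin p → ℝ) → ℝ}

lemma map_zero (hf : IsNorm f) : f 0 = 0 := (hf.1 0).2 rfl

lemma map_smul_of_nonneg (hf : IsNorm f) {c : ℝ} (hc : 0 ≤ c) (x : Fin p → ℝ) :
    f (c • x) = c * f x := by
  rw [hf.2.1, abs_of_nonneg hc]

lemma nonneg (hf : IsNorm f) (x : Fin p → ℝ) : 0 ≤ f x := by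
  have h := hf.2.2 x ((-1 : ℝ) • x)
  rw [hf.2.1, abs_neg, abs_one, one_mul, neg_one_smul, add_neg_cancel, hf.map_zero] at h
  linarith

lemma pos (hf : IsNorm f) {x : Fin p → ℝ} (hx : x ≠ 0) : 0 < f x :=
  (hf.nonneg x).lt_of_ne fun h => hx ((hf.1 x).1 h.symm)

lemma convexOn (hf : IsNorm f) : ConvexOn ℝ Set.univ f :=
  ⟨convex_univ, fun x _ y _ s t hs ht _ => by
    simpa only [hf.map_smul_of_nonneg hs, hf.map_smul_of_nonneg ht, smul_eq_mul]
      using hf.2.2 (s • x) (t • y)⟩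

lemma continuous (hf : IsNorm f) : Continuous f :=
  hf.convexOn.locallyLipschitz.continuous

lemma exists_pos_mul_norm_le (hf : IsNorm f) : ∃ m > 0, ∀ x, m * ‖x‖ ≤ f x := by
  rcases isEmpty_or_nonempty (Fin p) with _ | _
  · exact ⟨1, one_pos, fun x => by simp [Subsingleton.elim x 0, hf.map_zero]⟩
  obtain ⟨x₀, hx₀, hmin⟩ := (isCompact_sphere (0 : Fin p → ℝ) 1).exists_isMinOn
    (NormedSpace.sphere_nonempty.2 zero_le_one) hf.continuous.continuousOn
  have hx₀ne : x₀ ≠ 0 := ne_zero_of_mem_unit_sphere ⟨x₀, hx₀⟩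
  refine ⟨f x₀, hf.pos hx₀ne, fun x => ?_⟩
  rcases eq_or_ne x 0 with rfl | hx
  · simp [hf.map_zero]
  have hnx : 0 < ‖x‖ := norm_pos_iff.2 hx
  have hunit : ‖x‖⁻¹ • x ∈ Metric.sphere (0 : Fin p → ℝ) 1 := by
    simp [norm_smul, hnx.ne']
  have h := isMinOn_iff.1 hmin _ hunit
  rwa [hf.map_smul_of_nonneg (inv_nonneg.2 hnx.le), inv_mul_eq_div, le_div_iff₀ hnx] at h

lemma bddAbove_dot (hf : IsNorm f) (w : Fin p → ℝ) :
    BddAbove {t : ℝ | ∃ v : Fin p → ℝ, f v ≤ 1 ∧ t = dot w v} := by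
  obtain ⟨m, hm, hlow⟩ := hf.exists_pos_mul_norm_le
  refine ⟨(∑ i, |w i|) * m⁻¹, ?_⟩
  rintro _ ⟨v, hv, rfl⟩
  have hnv : ‖v‖ ≤ m⁻¹ := by
    rw [← one_div, le_div_iff₀' hm]
    exact (hlow v).trans hv
  exact (dot_le_sum_abs_mul_norm w v).trans
    (mul_le_mul_of_nonneg_left hnv (sum_nonneg fun i _ => abs_nonneg _))

lemma dualNorm_le_iff (hf : IsNorm f) (w : Fin p → ℝ) {c : ℝ} (hc : 0 ≤ c) :
    dualNorm f w ≤ c ↔ ∀ v, dot w v ≤ c * f v := by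
  have hne : {t : ℝ | ∃ v : Fin p → ℝ, f v ≤ 1 ∧ t = dot w v}.Nonempty :=
    ⟨0, 0, by rw [hf.map_zero]; exact zero_le_one, (dot_zero_right w).symm⟩
  rw [dualNorm, csSup_le_iff (hf.bddAbove_dot w) hne]
  constructor
  · intro h v
    rcases eq_or_ne v 0 with rfl | hv
    · simp [dot_zero_right, hf.map_zero]
    have hfv := hf.pos hv
    have h' := h _ ⟨(f v)⁻¹ • v, by
      rw [hf.map_smul_of_nonneg (inv_nonneg.2 hfv.le), inv_mul_cancel₀ hfv.ne'], rfl⟩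
    rw [dot_smul_right, inv_mul_le_iff₀ hfv] at h'
    linarith
  · rintro h _ ⟨v, hv, rfl⟩
    exact (h v).trans (mul_le_of_le_one_right hc hv)

end IsNorm

section HalfSpace

variable {f : (Fin p → ℝ) → ℝ} {a d : Fin p → ℝ} {β : ℝ}

lemma IsNorm.le_div_mul_of_isMinOn (hf : IsNorm f) (hβ : 0 < β)
    (hmin : IsMinOn f {u | β ≤ dot a u} d) {u : Fin p → ℝ} (hu : 0 < dot a u) :
    f d ≤ β / dot a u * f u := by
  have hmem : (β / dot a u) • u ∈ {u | β ≤ dot a u} := by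
    simp only [Set.mem_ofPred_eq, dot_smul_right, div_mul_cancel₀ β hu.ne', le_refl]
  simpa only [hf.map_smul_of_nonneg (div_pos hβ hu).le] using isMinOn_iff.1 hmin _ hmem

lemma IsNorm.dot_eq_of_isMinOn (hf : IsNorm f) (hβ : 0 < β) (hd : β ≤ dot a d)
    (hmin : IsMinOn f {u | β ≤ dot a u} d) : dot a d = β := by
  have hda : 0 < dot a d := hβ.trans_le hd
  have hfd : 0 < f d := hf.pos fun h => by simp [h, dot_zero_right] at hda
  have h := hf.le_div_mul_of_isMinOn hβ hmin hda
  rw [le_mul_iff_one_le_left hfd, one_le_div hda] at h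
  exact le_antisymm h hd

lemma IsNorm.dualNorm_le_one_of_isMinOn (hf : IsNorm f) (hβ : 0 < β)
    (hmin : IsMinOn f {u | β ≤ dot a u} d) : dualNorm f ((f d / β) • a) ≤ 1 := by
  rw [hf.dualNorm_le_iff _ zero_le_one]
  intro v
  rw [dot_smul_left, one_mul]
  rcases le_or_gt (dot a v) 0 with hv | hv
  · exact (mul_nonpos_of_nonneg_of_nonpos (div_nonneg (hf.nonneg d) hβ.le) hv).trans
      (hf.nonneg v)
  · have h := hf.le_div_mul_of_isMinOn hβ hmin hv
    rw [div_mul_eq_mul_div, le_div_iff₀ hv] at h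
    rw [div_mul_eq_mul_div, div_le_iff₀ hβ]
    linarith

theorem IsNorm.isMinOn_halfSpace_iff (hf : IsNorm f) (hβ : 0 < β) (hd : β ≤ dot a d) :
    IsMinOn f {u | β ≤ dot a u} d ↔
      ∃ l : ℝ, l ≠ 0 ∧ dot a d = β ∧ l * dot a d = f d ∧ dualNorm f (l • a) ≤ 1 := by
  constructor
  · intro hmin
    have hdeq := hf.dot_eq_of_isMinOn hβ hd hmin
    have hfd : 0 < f d := hf.pos fun h => by simp [h, dot_zero_right] at hdeq; linarith
    refine ⟨f d / β, (div_pos hfd hβ).ne', hdeq, ?_, hf.dualNorm_le_one_of_isMinOn hβ hmin⟩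
    rw [hdeq, div_mul_cancel₀ _ hβ.ne']
  · rintro ⟨l, hl, hdeq, hfd, hdual⟩
    have hlβ : 0 ≤ l * β := by rw [← hdeq, hfd]; exact hf.nonneg d
    have hl_pos : 0 < l := (nonneg_of_mul_nonneg_left hlβ hβ).lt_of_ne' hl
    refine isMinOn_iff.2 fun u (hu : β ≤ dot a u) => ?_
    have hsupp := (hf.dualNorm_le_iff _ zero_le_one).1 hdual u
    rw [dot_smul_left, one_mul] at hsupp
    calc f d = l * β := by rw [← hfd, hdeq]
      _ ≤ l * dot a u := by gcongr
      _ ≤ f u := hsupp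

end HalfSpace

lemma isOptCF_iff_isMinOn (a : Fin p → ℝ) (b : ℝ) (f : (Fin p → ℝ) → ℝ) (xF xCF : Fin p → ℝ) :
    IsOptCF a b f xF xCF ↔
      b ≤ dot a xCF ∧ IsMinOn f {u | b - dot a xF ≤ dot a u} (xCF - xF) := by
  simp only [IsOptCF, isMinOn_iff, Set.mem_ofPred_eq]
  refine and_congr_right fun _ => ⟨fun h u hu => ?_, fun h z hz => h (z - xF) ?_⟩
  · simpa using h (u + xF) (by rw [dot_add_right]; linarith)
  · rw [dot_sub_right]
    linarith

theorem cf_optimality_iff_general {p : ℕ}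
    (f : (Fin p → ℝ) → ℝ) (hf : IsNorm f)
    (a : Fin p → ℝ) (b : ℝ) (xF xCF : Fin p → ℝ)
    (hxF : dot a xF < b) :
    IsOptCF a b f xF xCF ↔
      ∃ l : ℝ, l ≠ 0 ∧ dot a xCF = b ∧
        l * dot a (xCF - xF) = f (xCF - xF) ∧ dualNorm f (l • a) ≤ 1 := by
  have hβ : 0 < b - dot a xF := sub_pos.2 hxF
  rw [isOptCF_iff_isMinOn]
  constructor
  · rintro ⟨hb, hmin⟩
    have hd : b - dot a xF ≤ dot a (xCF - xF) := by rw [dot_sub_right]; linarith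
    obtain ⟨l, hl, hdeq, hrest⟩ := (hf.isMinOn_halfSpace_iff hβ hd).1 hmin
    exact ⟨l, hl, by rw [dot_sub_right] at hdeq; linarith, hrest⟩
  · rintro ⟨l, hl, hb, hrest⟩
    have hd : dot a (xCF - xF) = b - dot a xF := by rw [dot_sub_right, hb]
    exact ⟨hb.ge, (hf.isMinOn_halfSpace_iff hβ hd.ge).2 ⟨l, hl, hd, hrest⟩⟩

/-- Optimality conditions for counterfactuals under an arbitrary norm
(Corollary 1): `x_CF` is an optimal counterfactual iff there is `λ ≠ 0` with
`⟪a, x_CF⟫ = b`, `λ⟪a, x_CF − x_F⟫ = f(x_CF − x_F)` and `f*(λ • a) ≤ 1`. -/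
theorem cf_optimality_iff {p : ℕ} (hp : 1 ≤ p)
    (f : (Fin p → ℝ) → ℝ) (hf : IsNorm f)
    (a : Fin p → ℝ) (ha : a ≠ 0) (b : ℝ) (xF xCF : Fin p → ℝ)
    (hxF : dot a xF < b) (hne : xCF ≠ xF) :
    IsOptCF a b f xF xCF ↔
      ∃ l : ℝ, l ≠ 0 ∧ dot a xCF = b ∧
        l * dot a (xCF - xF) = f (xCF - xF) ∧ dualNorm f (l • a) ≤ 1 :=
  cf_optimality_iff_general f hf a b xF xCF hxF
end
end

section
/- On ℝ^p let f be the ℓ1 norm, f(x) = Σ_i |x_i|, and let g be the ℓq norm for a real q ≥ 1, g(x) = (Σ_i |x_i|^q)^{1/q}. Let (a, b) be a linear classifier with a ≠ 0, let ρ > 0, let x_F ∈ ℝ^p satisfy ⟪a, x_F⟫ < b, and let x_RCF be an optimal robust counterfactual of x_F under f with robustness norm g and radius ρ, with x_RCF ≠ x_F. Set v := (1 / f(x_RCF − x_F)) • (x_RCF − x_F). Then for every d ∈ ℝ with d ≥ ρ · p^{1 − 1/q}, the point x̄ := x_RCF − d • v satisfies ⟪a, x̄⟫ ≤ b, i.e.,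 x̄ has the same classification as x_F. -/
/-!
Robust feasibility of a point `z` only depends on `dot a z`, and the cheapest `ℓ1` way to raise
`dot a` by `t ≥ 0` is to move by `t / M` along a coordinate `i` where `M = |a i|` is maximal.
Comparing `xRCF` with such a move from `xF` reaching `dot a xRCF` shows that `u = xRCF - xF` is
aligned with `a`: `dot a u = M * ‖u‖₁`. Comparing it with the move reaching
`b + ρ p^{1-1/q} M`, which is robust because `‖s‖₁ ≤ p^{1-1/q} ‖s‖_q`, gives
`dot a xRCF ≤ b + ρ p^{1-1/q} M`. Stepping back by `d • u / ‖u‖₁` lowers `dot a` by exactly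
`d M`.
-/

open Finset

noncomputable section

lemma dot_add {p : ℕ} (a x y : Fin p → ℝ) : dot a (x + y) = dot a x + dot a y :=
  dotProduct_add a x y

lemma dot_sub {p : ℕ} (a x y : Fin p → ℝ) : dot a (x - y) = dot a x - dot a y :=
  dotProduct_sub a x y

lemma dot_smul {p : ℕ} (a : Fin p → ℝ) (c : ℝ) (x : Fin p → ℝ) :
    dot a (c • x) = c * dot a x :=
  dotProduct_smul c a x

lemma dot_single_div {p : ℕ} {a : Fin p → ℝ} {i : Fin p} (hi : a i ≠ 0) (t : ℝ) :
    dot a (Pi.single i (t / a i)) = t := by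
  rw [dot, ← dotProduct, dotProduct_single, mul_div_cancel₀ _ hi]

lemma sum_abs_single {p : ℕ} (i : Fin p) (c : ℝ) :
    ∑ j, |(Pi.single i c : Fin p → ℝ) j| = |c| := by
  simp [Pi.single_apply, apply_ite]

lemma abs_dot_le_mul_sum_abs {p : ℕ} {a : Fin p → ℝ} {M : ℝ} (hM : ∀ i, |a i| ≤ M)
    (w : Fin p → ℝ) : |dot a w| ≤ M * ∑ i, |w i| := by
  rw [mul_sum]
  refine (abs_sum_le_sum_abs _ _).trans (sum_le_sum fun i _ => ?_)
  rw [abs_mul]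
  exact mul_le_mul_of_nonneg_right (hM i) (abs_nonneg _)

lemma sum_abs_le_card_rpow_mul_lpNorm {p : ℕ} {q : ℝ} (hq : 1 ≤ q) (s : Fin p → ℝ) :
    ∑ i, |s i| ≤ (p : ℝ) ^ (1 - 1 / q) * (∑ i, |s i| ^ q) ^ (1 / q) := by
  have hq0 : 0 < q := zero_lt_one.trans_le hq
  have h := Real.rpow_le_rpow (by positivity) (Real.rpow_sum_le_const_mul_sum_rpow univ s hq)
    (one_div_nonneg.mpr hq0.le)
  rwa [← Real.rpow_mul (by positivity), mul_one_div_cancel hq0.ne', Real.rpow_one,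
    Real.mul_rpow (by positivity) (by positivity), ← Real.rpow_mul (by positivity),
    card_univ, Fintype.card_fin, sub_mul, one_mul, mul_one_div_cancel hq0.ne'] at h

lemma neg_le_dot_of_lpNorm_le {p : ℕ} {q : ℝ} (hq : 1 ≤ q) {a : Fin p → ℝ} {M : ℝ}
    (hM₀ : 0 ≤ M) (hM : ∀ i, |a i| ≤ M) {ρ : ℝ} {s : Fin p → ℝ}
    (hs : (∑ i, |s i| ^ q) ^ (1 / q) ≤ ρ) :
    -(ρ * (p : ℝ) ^ (1 - 1 / q) * M) ≤ dot a s := by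
  have hs₁ : ∑ i, |s i| ≤ ρ * (p : ℝ) ^ (1 - 1 / q) :=
    (sum_abs_le_card_rpow_mul_lpNorm hq s).trans
      (by rw [mul_comm ρ]; exact mul_le_mul_of_nonneg_left hs (by positivity))
  calc -(ρ * (p : ℝ) ^ (1 - 1 / q) * M) ≤ -(M * ∑ i, |s i|) := by
        rw [mul_comm _ M]; exact neg_le_neg (mul_le_mul_of_nonneg_left hs₁ hM₀)
    _ ≤ dot a s := neg_le_of_abs_le (abs_dot_le_mul_sum_abs hM s)

lemma mul_sum_abs_sub_le_of_isOptRCF {p : ℕ} {a : Fin p → ℝ} {b ρ : ℝ}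
    {g : (Fin p → ℝ) → ℝ} {xF xRCF : Fin p → ℝ}
    (hopt : IsOptRCF a b (fun x => ∑ j, |x j|) g ρ xF xRCF) {i : Fin p} (hi : a i ≠ 0)
    {t : ℝ} (ht : 0 ≤ t) (hfeas : ∀ s, g s ≤ ρ → b ≤ dot a xF + t + dot a s) :
    |a i| * ∑ j, |(xRCF - xF) j| ≤ t := by
  have hz :
      ∑ j, |(xRCF - xF) j| ≤ ∑ j, |(xF + Pi.single i (t / a i) - xF : Fin p → ℝ) j| :=
    hopt.2 _ fun s hs => by
      rw [dot_add, dot_add, dot_single_div hi]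
      exact hfeas s hs
  rw [add_sub_cancel_left, sum_abs_single, abs_div, abs_of_nonneg ht,
    le_div_iff₀ (abs_pos.mpr hi)] at hz
  linarith

theorem rcf_backtrack_l1_lq_general {p : ℕ} (q : ℝ) (hq : 1 ≤ q)
    (a : Fin p → ℝ) (ha : a ≠ 0) (b : ℝ) (ρ : ℝ) (hρ : 0 < ρ)
    (xF xRCF : Fin p → ℝ) (hxF : dot a xF < b)
    (hopt : IsOptRCF a b (fun x => ∑ i, |x i|)
      (fun x => (∑ i, |x i| ^ q) ^ (1 / q)) ρ xF xRCF)
    (hne : xRCF ≠ xF) :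
    ∀ d : ℝ, ρ * (p : ℝ) ^ (1 - 1 / q) ≤ d →
      dot a (xRCF - d • ((1 / ∑ i, |(xRCF - xF) i|) • (xRCF - xF))) ≤ b := by
  intro d hd
  obtain ⟨j, hj⟩ := Function.ne_iff.mp ha
  obtain ⟨i, -, hmax⟩ := exists_max_image univ (fun i => |a i|) ⟨j, mem_univ j⟩
  have hmax' : ∀ k, |a k| ≤ |a i| := fun k => hmax k (mem_univ k)
  have hM : 0 < |a i| := (abs_pos.mpr hj).trans_le (hmax' j)
  set δ := ∑ k, |(xRCF - xF) k|
  have hδ : 0 < δ := by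
    obtain ⟨k, hk⟩ := Function.ne_iff.mp (sub_ne_zero.mpr hne)
    exact sum_pos' (fun k _ => abs_nonneg _) ⟨k, mem_univ k, abs_pos.mpr hk⟩
  have hq0 : q ≠ 0 := (zero_lt_one.trans_le hq).ne'
  have hg0 : (∑ k, |(0 : Fin p → ℝ) k| ^ q) ^ (1 / q) ≤ ρ := by
    simpa [Real.zero_rpow hq0, Real.zero_rpow (inv_ne_zero hq0)] using hρ.le
  have hb_le : b ≤ dot a xRCF := by simpa using hopt.1 0 hg0
  have h_aligned : |a i| * δ ≤ dot a (xRCF - xF) :=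
    mul_sum_abs_sub_le_of_isOptRCF hopt (abs_pos.mp hM) (by rw [dot_sub]; linarith)
      fun s hs => by have := hopt.1 s hs; rw [dot_add] at this; rw [dot_sub]; linarith
  have h_holder : dot a (xRCF - xF) ≤ |a i| * δ :=
    (le_abs_self _).trans (abs_dot_le_mul_sum_abs hmax' _)
  have hmargin : 0 ≤ ρ * (p : ℝ) ^ (1 - 1 / q) * |a i| := by positivity
  have h_upper : |a i| * δ ≤ b + ρ * (p : ℝ) ^ (1 - 1 / q) * |a i| - dot a xF :=
    mul_sum_abs_sub_le_of_isOptRCF hopt (abs_pos.mp hM)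
      (t := b + ρ * (p : ℝ) ^ (1 - 1 / q) * |a i| - dot a xF) (by linarith)
      fun s hs => by linarith [neg_le_dot_of_lpNorm_le hq hM.le hmax' hs]
  calc dot a (xRCF - d • ((1 / δ) • (xRCF - xF))) = dot a xRCF - d * |a i| := by
        rw [dot_sub, dot_smul, dot_smul, le_antisymm h_holder h_aligned]
        field_simp
    _ ≤ b + ρ * (p : ℝ) ^ (1 - 1 / q) * |a i| - d * |a i| := by
        rw [dot_sub] at h_holder
        linarith
    _ ≤ b := by nlinarith [mul_le_mul_of_nonneg_right hd hM.le]

/-- Corollary 4(i): for the `ℓ1` norm as counterfactual distance and `ℓq` robustness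
norm, moving back from the robust counterfactual along the counterfactual direction by
any `d ≥ ρ·p^{1−1/q}` gives a point with the same classification as the factual. -/
theorem rcf_backtrack_l1_lq {p : ℕ} (hp : 1 ≤ p) (q : ℝ) (hq : 1 ≤ q)
    (a : Fin p → ℝ) (ha : a ≠ 0) (b : ℝ) (ρ : ℝ) (hρ : 0 < ρ)
    (xF xRCF : Fin p → ℝ) (hxF : dot a xF < b)
    (hopt : IsOptRCF a b (fun x => ∑ i, |x i|)
      (fun x => (∑ i, |x i| ^ q) ^ (1 / q)) ρ xF xRCF)
    (hne : xRCF ≠ xF) :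
    ∀ d : ℝ, ρ * (p : ℝ) ^ (1 - 1 / q) ≤ d →
      dot a (xRCF - d • ((1 / ∑ i, |(xRCF - xF) i|) • (xRCF - xF))) ≤ b :=
  rcf_backtrack_l1_lq_general q hq a ha b ρ hρ xF xRCF hxF hopt hne
end
end
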